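/- arXiv:cs/0601036 — 4 statements merged into one kernel-verified Lean document; each statement's English description precedes it below -/
import Mathlib

section
/- Let m ≥ 1 and let D = {−1,+1}^m be the set of all words of length m over the alphabet {−1,+1} (i.e., all patterns of length m with no zero entries). Then cap(D) = (m−1)/m. -/
/-- The integer value of a binary symbol. -/
def boolToInt (b : Bool) : ℤ := if b then 1 else 0

/-- Componentwise difference of two binary words, a word over `{-1, 0, +1}`. -/
def diffWord (u v : List Bool) : List ℤ :=
  List.zipWith (fun a b => boolToInt a - boolToInt b) u v

/-- A forbidden pattern: a nonempty finite word over the alphabet `{-1, 0, +1}`. -/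
def IsPattern (p : List ℤ) : Prop :=
  p ≠ [] ∧ ∀ x ∈ p, x = -1 ∨ x = 0 ∨ x = 1

/-- A code `C` of binary words avoids the forbidden set `D` if no difference of two
distinct code words contains a pattern of `D` as a contiguous subword (factor). -/
def AvoidsCode (D : Finset (List ℤ)) (C : Finset (List Bool)) : Prop :=
  ∀ u ∈ C, ∀ v ∈ C, u ≠ v → ∀ p ∈ D, ¬ p <:+: diffWord u v

/-- `delta D n` : the maximal cardinality of a code of binary words of length `n`
avoiding the forbidden set `D`. -/
noncomputable def delta (D : Finset (List ℤ)) (n : ℕ) : ℕ :=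
  sSup {k : ℕ | ∃ C : Finset (List Bool),
    (∀ u ∈ C, u.length = n) ∧ AvoidsCode D C ∧ C.card = k}

/-- The capacity of a set of forbidden difference patterns. -/
noncomputable def cap (D : Finset (List ℤ)) : ℝ :=
  Filter.limsup (fun n : ℕ => Real.logb 2 (delta D n) / n) Filter.atTop


/-!
Cut a binary word of length `n` into `⌊n/m⌋` blocks of length `m` and a tail. Forcing a `0` at
the last position of every block gives a code of size `2^(n - ⌊n/m⌋)` whose differences vanish
somewhere in every window of length `m`. Conversely, two words of an avoiding code never differ
at every position of a block, so a block admits at most `2^(m-1)` words and `δ_m ≤ 2^(m-1)`;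
since `δ` is submultiplicative (first coordinates and fibres of a code are codes again), this
gives `δ_n ≤ 2^(n - ⌊n/m⌋)`. Hence `δ_n = 2^(n - ⌊n/m⌋)` and `log₂ δ_n / n → (m - 1)/m`.
-/

open Finset

def binaryWords (n : ℕ) : Finset (List Bool) :=
  (univ : Finset (List.Vector Bool n)).map ⟨List.Vector.toList, List.Vector.toList_injective⟩

lemma mem_binaryWords {n : ℕ} {u : List Bool} : u ∈ binaryWords n ↔ u.length = n := by
  simp only [binaryWords, mem_map, mem_univ, true_and, Function.Embedding.coeFn_mk]
  exact ⟨fun ⟨w, hw⟩ => hw ▸ w.toList_length, fun h => ⟨⟨u, h⟩, rfl⟩⟩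

lemma card_binaryWords (n : ℕ) : (binaryWords n).card = 2 ^ n := by
  simp [binaryWords, card_vector]

lemma card_le_two_pow_of_length {C : Finset (List Bool)} {n : ℕ}
    (hlen : ∀ u ∈ C, u.length = n) : C.card ≤ 2 ^ n :=
  card_binaryWords n ▸ card_le_card fun u hu => mem_binaryWords.2 (hlen u hu)

section AnyPatterns

variable {D : Finset (List ℤ)}

lemma AvoidsCode.mono {C C' : Finset (List Bool)} (hC : AvoidsCode D C) (h : C' ⊆ C) :
    AvoidsCode D C' :=
  fun u hu v hv => hC u (h hu) v (h hv)

lemma AvoidsCode.image_take {C : Finset (List Bool)} (hC : AvoidsCode D C) (a : ℕ) :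
    AvoidsCode D (C.image (List.take a)) := by
  simp only [AvoidsCode, mem_image, forall_exists_index, and_imp]
  rintro _ u hu rfl _ v hv rfl huv p hp hinf
  refine hC u hu v hv (fun h => huv (h ▸ rfl)) p hp (hinf.trans ?_)
  rw [diffWord, ← List.take_zipWith]
  exact (List.take_prefix a _).isInfix

lemma AvoidsCode.image_drop {C : Finset (List Bool)} (hC : AvoidsCode D C) (a : ℕ) :
    AvoidsCode D (C.image (List.drop a)) := by
  simp only [AvoidsCode, mem_image, forall_exists_index, and_imp]
  rintro _ u hu rfl _ v hv rfl huv p hp hinf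
  refine hC u hu v hv (fun h => huv (h ▸ rfl)) p hp (hinf.trans ?_)
  rw [diffWord, ← List.drop_zipWith]
  exact (List.drop_suffix a _).isInfix

lemma card_le_delta {C : Finset (List Bool)} {n : ℕ} (hlen : ∀ u ∈ C, u.length = n)
    (hC : AvoidsCode D C) : C.card ≤ delta D n := by
  refine le_csSup ⟨2 ^ n, ?_⟩ ⟨C, hlen, hC, rfl⟩
  rintro _ ⟨C', hlen', -, rfl⟩
  exact card_le_two_pow_of_length hlen'

lemma delta_le_of_forall {n N : ℕ} (h : ∀ C : Finset (List Bool),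
    (∀ u ∈ C, u.length = n) → AvoidsCode D C → C.card ≤ N) : delta D n ≤ N := by
  refine csSup_le ⟨0, ∅, by simp, fun u hu => by simp at hu, rfl⟩ ?_
  rintro _ ⟨C, hlen, hC, rfl⟩
  exact h C hlen hC

lemma delta_le_two_pow (D : Finset (List ℤ)) (n : ℕ) : delta D n ≤ 2 ^ n :=
  delta_le_of_forall fun _ hlen _ => card_le_two_pow_of_length hlen

/-- The prefixes of a code form a code, and so do the suffixes of the words with a given prefix. -/
lemma delta_add_le (a b : ℕ) : delta D (a + b) ≤ delta D a * delta D b := by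
  classical
  refine delta_le_of_forall fun C hlen hC => ?_
  have hfibre : ∀ x ∈ C.image (List.take a), {u ∈ C | u.take a = x}.card ≤ delta D b := by
    intro x _
    have hinj :
        Set.InjOn (List.drop a) ((C.filter (·.take a = x) : Finset _) : Set (List Bool)) := by
      intro u hu v hv huv
      simp only [coe_filter, Set.mem_ofPred_eq] at hu hv
      rw [← List.take_append_drop a u, ← List.take_append_drop a v, hu.2, hv.2, huv]
    rw [← card_image_of_injOn hinj]
    refine card_le_delta ?_ ((hC.mono (filter_subset _ _)).image_drop a)
    simp only [mem_image, mem_filter]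
    rintro _ ⟨u, ⟨hu, -⟩, rfl⟩
    simp [hlen u hu]
  calc C.card ≤ delta D b * (C.image (List.take a)).card := card_le_mul_card_image C _ hfibre
    _ ≤ delta D b * delta D a := by
      gcongr
      refine card_le_delta ?_ (hC.image_take a)
      simp only [mem_image]
      rintro _ ⟨u, hu, rfl⟩
      simp [hlen u hu]
    _ = delta D a * delta D b := mul_comm _ _

end AnyPatterns

section PlusMinusPatterns

variable {D : Finset (List ℤ)} {m : ℕ}

lemma mem_diffWord_map_not (u : List Bool) :
    ∀ x ∈ diffWord u (u.map not), x = -1 ∨ x = 1 := by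
  simp only [diffWord, List.zipWith_map_right, List.zipWith_self, List.mem_map]
  rintro _ ⟨b, -, rfl⟩
  cases b <;> simp [boolToInt]

/-- A code avoiding all `±1` words of length `m` never contains a word together with its
complement, so it fills at most half of `{0,1}^m`. -/
lemma delta_le_two_pow_pred (hm : 0 < m)
    (hD : ∀ p : List ℤ, p.length = m → (∀ x ∈ p, x = -1 ∨ x = 1) → p ∈ D) :
    delta D m ≤ 2 ^ (m - 1) := by
  classical
  refine delta_le_of_forall fun C hlen hC => ?_
  have hdisj : Disjoint C (C.image (List.map not)) := by
    refine disjoint_left.2 fun u hu hu' => ?_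
    obtain ⟨v, hv, rfl⟩ := mem_image.1 hu'
    have hne : v ≠ v.map not := by
      intro h
      obtain ⟨b, t, rfl⟩ := List.exists_cons_of_length_pos (hlen v hv ▸ hm)
      cases b <;> simp at h
    refine hC v hv _ hu hne _ (hD _ ?_ (mem_diffWord_map_not v)) (List.infix_refl _)
    simp [diffWord, hlen v hv]
  have hcard : 2 * C.card ≤ 2 ^ m := by
    calc 2 * C.card = (C ∪ C.image (List.map not)).card := by
          rw [card_union_of_disjoint hdisj,
            card_image_of_injective _ (List.map_injective_iff.2 Bool.not_injective), two_mul]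
      _ ≤ 2 ^ m := card_le_two_pow_of_length (by
          simp only [mem_union, mem_image]
          rintro _ (hu | ⟨u, hu, rfl⟩) <;> simp [hlen _ hu])
  have hhalf : 2 ^ m = 2 * 2 ^ (m - 1) := by rw [← pow_succ']; congr 1; omega
  omega

lemma delta_le_two_pow_sub_div (hm : 0 < m)
    (hD : ∀ p : List ℤ, p.length = m → (∀ x ∈ p, x = -1 ∨ x = 1) → p ∈ D) (n : ℕ) :
    delta D n ≤ 2 ^ (n - n / m) := by
  have hblocks : ∀ k r, delta D (m * k + r) ≤ 2 ^ ((m - 1) * k + r) := by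
    intro k r
    induction k with
    | zero => simpa using delta_le_two_pow D r
    | succ k ih =>
      calc delta D (m * (k + 1) + r) = delta D (m + (m * k + r)) := by ring_nf
        _ ≤ 2 ^ (m - 1) * 2 ^ ((m - 1) * k + r) :=
          (delta_add_le _ _).trans (Nat.mul_le_mul (delta_le_two_pow_pred hm hD) ih)
        _ = 2 ^ ((m - 1) * (k + 1) + r) := by ring_nf
  have hn : n - n / m = (m - 1) * (n / m) + n % m := by
    have := Nat.div_add_mod n m
    rw [Nat.sub_one_mul]
    have : n / m ≤ m * (n / m) := Nat.le_mul_of_pos_left _ hm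
    omega
  simpa [hn, Nat.div_add_mod] using hblocks (n / m) (n % m)

end PlusMinusPatterns

def periodicZeroCode (m n : ℕ) : Finset (List Bool) :=
  ({f : Fin n → Bool | ∀ i : Fin n, m ∣ (i : ℕ) + 1 → f i = false} : Finset _).image List.ofFn

lemma card_periodicZeroCode (m n : ℕ) : (periodicZeroCode m n).card = 2 ^ (n - n / m) := by
  classical
  rw [periodicZeroCode, card_image_of_injective _ List.ofFn_injective]
  have hpi : ({f : Fin n → Bool | ∀ i : Fin n, m ∣ (i : ℕ) + 1 → f i = false} : Finset _) =
      Fintype.piFinset fun i : Fin n => if m ∣ (i : ℕ) + 1 then {false} else univ := by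
    ext f
    simp only [mem_filter, mem_univ, true_and, Fintype.mem_piFinset]
    refine forall_congr' fun i => ?_
    split_ifs <;> simp [*]
  have hzeros : #{i : Fin n | m ∣ (i : ℕ) + 1} = n / m := by
    rw [← Nat.card_multiples, ← card_map Fin.valEmbedding, map_filter', Fin.map_valEmbedding_univ,
      Nat.Iio_eq_range]
    congr 1
    ext e
    simp only [mem_filter, mem_range, Fin.valEmbedding_apply]
    exact ⟨fun ⟨he, a, ha, hae⟩ => ⟨he, hae ▸ ha⟩, fun ⟨he, h⟩ => ⟨he, ⟨e, he⟩, h, rfl⟩⟩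
  have hrest := card_filter_add_card_filter_not (s := univ) fun i : Fin n => m ∣ (i : ℕ) + 1
  rw [hzeros, card_univ, Fintype.card_fin] at hrest
  rw [hpi, Fintype.card_piFinset]
  simp only [apply_ite card, card_singleton, card_univ, Fintype.card_bool]
  rw [prod_ite, prod_const_one, prod_const, one_mul]
  congr 1
  omega

/-- Every window of length `m` of a difference of two words of the code contains a position
`i` with `m ∣ i + 1`, where the difference is `0`. -/
lemma avoidsCode_periodicZeroCode {D : Finset (List ℤ)} {m : ℕ} (hm : 0 < m)
    (hD : ∀ p ∈ D, m ≤ p.length ∧ 0 ∉ p) (n : ℕ) :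
    AvoidsCode D (periodicZeroCode m n) := by
  simp only [AvoidsCode, periodicZeroCode, mem_image, mem_filter, mem_univ, true_and]
  rintro _ ⟨f, hf, rfl⟩ _ ⟨g, hg, rfl⟩ - p hp hinf
  obtain ⟨hlen, hzero⟩ := hD p hp
  obtain ⟨k, hk, hget⟩ := List.infix_iff_getElem?.1 hinf
  have hi : m - 1 - k % m < p.length := by omega
  have hik : m - 1 - k % m + k < n := by simp [diffWord] at hk; omega
  have hdvd : m ∣ m - 1 - k % m + k + 1 := by
    refine ⟨k / m + 1, ?_⟩
    have := Nat.div_add_mod k m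
    have := Nat.mod_lt k hm
    rw [mul_add]
    omega
  have h0 := hget _ hi
  simp [diffWord, hik, hf ⟨_, hik⟩ hdvd, hg ⟨_, hik⟩ hdvd, boolToInt] at h0
  exact hzero (h0 ▸ List.getElem_mem hi)

lemma tendsto_sub_div_div {m : ℕ} (hm : 0 < m) :
    Filter.Tendsto (fun n : ℕ => ((n - n / m : ℕ) : ℝ) / n) Filter.atTop
      (nhds (((m : ℝ) - 1) / m)) := by
  have hm' : (0 : ℝ) < m := by exact_mod_cast hm
  have hbounds (n : ℕ) (hn : 0 < n) : ((m : ℝ) - 1) / m ≤ ((n - n / m : ℕ) : ℝ) / n ∧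
      ((n - n / m : ℕ) : ℝ) / n ≤ ((m : ℝ) - 1) / m + 1 / n := by
    have hn' : (0 : ℝ) < n := by exact_mod_cast hn
    have hlow : ((m * (n / m) : ℕ) : ℝ) ≤ n := by exact_mod_cast Nat.mul_div_le n m
    have hup : (n : ℝ) < ((m * (n / m + 1) : ℕ) : ℝ) := by exact_mod_cast Nat.lt_mul_div_succ n hm
    push_cast [Nat.cast_sub (Nat.div_le_self n m)] at hlow hup ⊢
    constructor
    · rw [div_le_div_iff₀ hm' hn']
      nlinarith
    · rw [div_add_div _ _ hm'.ne' hn'.ne', div_le_div_iff₀ hn' (by positivity)]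
      nlinarith
  have hupper : Filter.Tendsto (fun n : ℕ => ((m : ℝ) - 1) / m + 1 / n) Filter.atTop
      (nhds (((m : ℝ) - 1) / m)) := by
    simpa using tendsto_const_nhds.add (tendsto_one_div_atTop_nhds_zero_nat (𝕜 := ℝ))
  refine tendsto_of_tendsto_of_tendsto_of_le_of_le' tendsto_const_nhds hupper ?_ ?_
  · filter_upwards [Filter.eventually_gt_atTop 0] with n hn using (hbounds n hn).1
  · filter_upwards [Filter.eventually_gt_atTop 0] with n hn using (hbounds n hn).2

/-- the capacity of the set of all length-`m` patterns
over `{-1, +1}` equals `(m - 1) / m`. -/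
theorem capacity_full_nonzero_patterns (m : ℕ) (hm : 1 ≤ m) (D : Finset (List ℤ))
    (hD : ∀ p : List ℤ, p ∈ D ↔ (p.length = m ∧ ∀ x ∈ p, x = -1 ∨ x = 1)) :
    cap D = ((m : ℝ) - 1) / m := by
  have hdelta (n : ℕ) : delta D n = 2 ^ (n - n / m) := by
    refine le_antisymm (delta_le_two_pow_sub_div hm (fun p hl hp => (hD p).2 ⟨hl, hp⟩) n) ?_
    have hzero_free : ∀ p ∈ D, m ≤ p.length ∧ 0 ∉ p := fun p hp => by
      obtain ⟨hl, hpm⟩ := (hD p).1 hp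
      exact ⟨hl.ge, fun h0 => by simpa using hpm 0 h0⟩
    rw [← card_periodicZeroCode m n]
    refine card_le_delta ?_ (avoidsCode_periodicZeroCode hm hzero_free n)
    simp [periodicZeroCode]
  have hrate : (fun n : ℕ => Real.logb 2 (delta D n) / n) =
      fun n : ℕ => ((n - n / m : ℕ) : ℝ) / n := by
    funext n
    rw [hdelta, Nat.cast_pow, Nat.cast_ofNat, Real.logb_pow, Real.logb_self_eq_one one_lt_two,
      mul_one]
  rw [cap, hrate]
  exact (tendsto_sub_div_div hm).limsup_eq
end

section
/- Let m ≥ 1 and let D = {0^{m−1}+} be the singleton set whose unique pattern consists of m−1 zeros followed by the symbol +1. Then for every n ≥ m−1 one has δ_n(D) = 2^{m−1}. In particular cap(D) = 0. -/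
def zerosPlus (M : ℕ) : List ℤ := List.replicate M 0 ++ [1]

lemma List.exists_append_cons_of_ne {α : Type*} :
    ∀ {u v : List α}, u.length = v.length → u ≠ v →
      ∃ p a b s t, a ≠ b ∧ u = p ++ a :: s ∧ v = p ++ b :: t
  | [], [], _, hne => absurd rfl hne
  | a :: u, b :: v, hlen, hne => by
    by_cases hab : a = b
    · subst hab
      obtain ⟨p, c, d, s, t, hcd, rfl, rfl⟩ :=
        List.exists_append_cons_of_ne (by simpa using hlen) (by simpa using hne)
      exact ⟨a :: p, c, d, s, t, hcd, rfl, rfl⟩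
    · exact ⟨[], a, b, u, v, hab, rfl, rfl⟩

lemma List.le_length_of_take_eq {α : Type*} {M : ℕ} {p s t : List α} {a b : α} (hab : a ≠ b)
    (h : (p ++ a :: s).take M = (p ++ b :: t).take M) : M ≤ p.length := by
  by_contra! hM
  have := congrArg (·[p.length]?) h
  simp [hM] at this
  exact hab this

lemma diffWord_cons (a b : Bool) (s t : List Bool) :
    diffWord (a :: s) (b :: t) = (boolToInt a - boolToInt b) :: diffWord s t := rfl

lemma diffWord_append {p q : List Bool} (h : p.length = q.length) (s t : List Bool) :
    diffWord (p ++ s) (q ++ t) = diffWord p q ++ diffWord s t :=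
  List.zipWith_append h

lemma diffWord_self (p : List Bool) : diffWord p p = List.replicate p.length 0 := by
  induction p with
  | nil => rfl
  | cons a p ih => simp [diffWord_cons, ih, List.replicate_succ]

lemma zerosPlus_infix_replicate_append {M L : ℕ} (h : M ≤ L) (w : List ℤ) :
    zerosPlus M <:+: List.replicate L 0 ++ 1 :: w :=
  ⟨List.replicate (L - M) 0, w, by
    rw [zerosPlus, ← List.append_assoc, ← List.replicate_add, Nat.sub_add_cancel h,
      List.append_assoc, List.singleton_append]⟩

lemma zerosPlus_infix_diffWord_of_take_eq {M : ℕ} {u v : List Bool}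
    (hlen : u.length = v.length) (hne : u ≠ v) (htake : u.take M = v.take M) :
    zerosPlus M <:+: diffWord u v ∨ zerosPlus M <:+: diffWord v u := by
  obtain ⟨p, a, b, s, t, hab, rfl, rfl⟩ := List.exists_append_cons_of_ne hlen hne
  have hM := List.le_length_of_take_eq hab htake
  simp only [diffWord_append rfl, diffWord_self, diffWord_cons]
  cases a <;> cases b <;> simp only [ne_eq, not_true_eq_false] at hab
  · exact Or.inr (zerosPlus_infix_replicate_append hM _)
  · exact Or.inl (zerosPlus_infix_replicate_append hM _)

lemma List.mem_of_append_singleton_infix_append {α : Type*} {p d l : List α} {y : α}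
    (h : p ++ [y] <:+: d ++ l) (hd : d.length ≤ p.length) : y ∈ l := by
  obtain ⟨s, t, h⟩ := h
  have := congrArg (List.drop d.length) h
  rw [List.drop_left] at this
  rw [← this, show s ++ (p ++ [y]) ++ t = (s ++ p) ++ y :: t by simp,
    List.drop_append_of_le_length (by simp; omega)]
  simp

lemma not_zerosPlus_infix_append_replicate {M : ℕ} {d : List ℤ} (hd : d.length ≤ M) (k : ℕ) :
    ¬ zerosPlus M <:+: d ++ List.replicate k 0 := fun h => by
  have := List.mem_of_append_singleton_infix_append h (by simpa using hd)
  simp [List.mem_replicate] at this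

lemma card_le_of_avoidsCode_zerosPlus {M n : ℕ} (hn : M ≤ n) {C : Finset (List Bool)}
    (hlen : ∀ u ∈ C, u.length = n) (hC : AvoidsCode {zerosPlus M} C) :
    C.card ≤ 2 ^ M := by
  let prefixVec (u : List Bool) : List.Vector Bool M :=
    ⟨(u ++ List.replicate M false).take M, by simp⟩
  have hprefix : ∀ u ∈ C, (prefixVec u).toList = u.take M := fun u hu =>
    List.take_append_of_le_length (by rw [hlen u hu]; exact hn)
  calc C.card ≤ Fintype.card (List.Vector Bool M) :=
        Finset.card_le_card_of_injOn prefixVec (fun _ _ => Finset.mem_coe.2 (Finset.mem_univ _))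
          fun u hu v hv huv => by
            by_contra hne
            have htake : u.take M = v.take M := by
              rw [← hprefix u hu, ← hprefix v hv, huv]
            rcases zerosPlus_infix_diffWord_of_take_eq ((hlen u hu).trans (hlen v hv).symm)
                hne htake with h | h
            · exact hC u hu v hv hne _ (Finset.mem_singleton_self _) h
            · exact hC v hv u hu (Ne.symm hne) _ (Finset.mem_singleton_self _) h
    _ = 2 ^ M := by simp [card_vector]

def paddedCode (M n : ℕ) : Finset (List Bool) :=
  Finset.univ.image fun p : List.Vector Bool M => p.toList ++ List.replicate (n - M) false

lemma card_paddedCode (M n : ℕ) : (paddedCode M n).card = 2 ^ M := by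
  rw [paddedCode, Finset.card_image_of_injective _
    fun p q h => List.Vector.toList_injective (List.append_cancel_right h)]
  simp [card_vector]

lemma length_of_mem_paddedCode {M n : ℕ} (hn : M ≤ n) :
    ∀ u ∈ paddedCode M n, u.length = n := by
  simp only [paddedCode, Finset.mem_image, Finset.mem_univ, true_and]
  rintro _ ⟨p, rfl⟩
  simp; omega

lemma avoidsCode_paddedCode (M n : ℕ) : AvoidsCode {zerosPlus M} (paddedCode M n) := by
  simp only [AvoidsCode, paddedCode, Finset.mem_image, Finset.mem_univ, true_and,
    Finset.mem_singleton]
  rintro _ ⟨p, rfl⟩ _ ⟨q, rfl⟩ - _ rfl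
  rw [diffWord_append (by simp), diffWord_self, List.length_replicate]
  exact not_zerosPlus_infix_append_replicate (by simp [diffWord]) _

lemma delta_eq_card {D : Finset (List ℤ)} {n : ℕ} {C₀ : Finset (List Bool)}
    (hlen : ∀ u ∈ C₀, u.length = n) (hC₀ : AvoidsCode D C₀)
    (hmax : ∀ C : Finset (List Bool), (∀ u ∈ C, u.length = n) → AvoidsCode D C →
      C.card ≤ C₀.card) :
    delta D n = C₀.card :=
  IsGreatest.csSup_eq ⟨⟨C₀, hlen, hC₀, rfl⟩, by rintro _ ⟨C, hC, hCD, rfl⟩; exact hmax C hC hCD⟩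

lemma delta_zerosPlus {M n : ℕ} (hn : M ≤ n) : delta {zerosPlus M} n = 2 ^ M := by
  rw [← card_paddedCode M n]
  refine delta_eq_card (length_of_mem_paddedCode hn) (avoidsCode_paddedCode M n) ?_
  intro C hlen hC
  rw [card_paddedCode]
  exact card_le_of_avoidsCode_zerosPlus hn hlen hC

lemma cap_eq_zero_of_delta_eventually_eq {D : Finset (List ℤ)} {M : ℕ}
    (h : ∀ᶠ n in Filter.atTop, delta D n = 2 ^ M) : cap D = 0 := by
  refine Filter.Tendsto.limsup_eq ((tendsto_const_div_atTop_nhds_zero_nat (M : ℝ)).congr' ?_)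
  filter_upwards [h] with n hn
  rw [hn, Nat.cast_pow, Nat.cast_ofNat, Real.logb_pow, Real.logb_self_eq_one one_lt_two, mul_one]

theorem delta_zeros_plus_general (m : ℕ) (D : Finset (List ℤ))
    (hD : D = {List.replicate (m - 1) (0:ℤ) ++ [1]}) :
    (∀ n : ℕ, m - 1 ≤ n → delta D n = 2 ^ (m - 1)) ∧ cap D = 0 := by
  have hdelta : ∀ n : ℕ, m - 1 ≤ n → delta D n = 2 ^ (m - 1) := fun n hn =>
    hD ▸ delta_zerosPlus hn
  exact ⟨hdelta, cap_eq_zero_of_delta_eventually_eq (Filter.eventually_atTop.2 ⟨_, hdelta⟩)⟩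

/-- for the single forbidden pattern `0^{m-1}+`, for every `n ≥ m-1` one
has `δ_n(D) = 2^{m-1}`; in particular `cap(D) = 0`. -/
theorem delta_zeros_plus (m : ℕ) (hm : 1 ≤ m) (D : Finset (List ℤ))
    (hD : D = {List.replicate (m - 1) (0:ℤ) ++ [1]}) :
    (∀ n : ℕ, m - 1 ≤ n → delta D n = 2 ^ (m - 1)) ∧ cap D = 0 :=
  delta_zeros_plus_general m D hD
end

section
/- Let D be a nonempty finite set of forbidden patterns, let m be the maximal length of the patterns in D, and let M be the sum of the lengths of the patterns in D. If there exists an admissible word for D, then there exists an admissible word for D of length at most 2M + 2m. -/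
/-- A word `w` over `{-1,0,+1}` is admissible for `D` (with `m` the maximal pattern
length): it has prefix `0^m`, suffix `+0^{m-1}`, and contains no element of
`D ∪ (-D)` as a factor. -/
def Admissible (D : Finset (List ℤ)) (m : ℕ) (w : List ℤ) : Prop :=
  (∀ x ∈ w, x = -1 ∨ x = 0 ∨ x = 1) ∧
  List.replicate m (0:ℤ) <+: w ∧
  ((1:ℤ) :: List.replicate (m - 1) (0:ℤ)) <:+ w ∧
  ∀ p ∈ D, ¬ p <:+: w ∧ ¬ (p.map (fun x => -x)) <:+: w

namespace List

variable {α : Type*}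

theorem infix_append_cases {q a b : List α} (h : q <:+: a ++ b) :
    q <:+: a ∨ q <:+: b ∨ ∃ s t, q = s ++ t ∧ s <:+ a ∧ t <+: b := by
  obtain ⟨u, v, huv⟩ := h
  rw [append_assoc, append_eq_append_iff] at huv
  rcases huv with ⟨a', rfl, hqv⟩ | ⟨c, rfl, rfl⟩
  · rw [append_eq_append_iff] at hqv
    rcases hqv with ⟨x, rfl, rfl⟩ | ⟨t, rfl, rfl⟩
    · exact Or.inl ⟨u, x, by simp⟩
    · exact Or.inr (Or.inr ⟨a', t, rfl, suffix_append u a', prefix_append t v⟩)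
  · exact Or.inr (Or.inl ⟨c, v, by simp⟩)

theorem append_infix_append_of_suffix_of_prefix {s t y z : List α} (hs : s <:+ y)
    (ht : t <+: z) : s ++ t <:+: y ++ z := by
  obtain ⟨u, rfl⟩ := hs
  obtain ⟨v, rfl⟩ := ht
  exact ⟨u, v, by simp⟩

theorem not_infix_append_of_suffix_transfer {q x y z : List α} (hxy : x <+: y)
    (hyz : ¬ q <:+: y ++ z) (htransfer : ∀ s, s <+: q → s ≠ [] → s <:+ x → s <:+ y) :
    ¬ q <:+: x ++ z := by
  intro h
  rcases infix_append_cases h with hx | hz | ⟨s, t, rfl, hs, ht⟩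
  · exact hyz (hx.trans (hxy.trans (prefix_append y z)).isInfix)
  · exact hyz (hz.trans (suffix_append y z).isInfix)
  · have hsy : s <:+ y := by
      rcases eq_or_ne s [] with rfl | hne
      · exact nil_suffix
      · exact htransfer s (prefix_append s t) hne hs
    exact hyz (append_infix_append_of_suffix_of_prefix hsy ht)

end List

open List

section Automaton

variable {α : Type*} [DecidableEq α]

def nonemptyPrefixes (Q : Finset (List α)) : Finset (List α) :=
  Q.biUnion fun q => (Finset.Icc 1 q.length).image q.take

theorem card_nonemptyPrefixes_le (Q : Finset (List α)) :
    (nonemptyPrefixes Q).card ≤ ∑ q ∈ Q, q.length :=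
  Finset.card_biUnion_le.trans <| Finset.sum_le_sum fun q _ =>
    Finset.card_image_le.trans (by simp)

theorem mem_nonemptyPrefixes {Q : Finset (List α)} {q s : List α} (hq : q ∈ Q)
    (hsq : s <+: q) (hs : s ≠ []) : s ∈ nonemptyPrefixes Q :=
  Finset.mem_biUnion.2 ⟨q, hq, Finset.mem_image.2
    ⟨s.length, Finset.mem_Icc.2 ⟨length_pos_iff.2 hs, hsq.length_le⟩,
      (prefix_iff_eq_take.1 hsq).symm⟩⟩

noncomputable def longestSuffixIn (P : Finset (List α)) (u : List α) : Option (List α) :=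
  (P.filter (· <:+ u)).toList.argmax length

theorem mem_suffix_of_longestSuffixIn_eq_some {P : Finset (List α)} {u t : List α}
    (h : longestSuffixIn P u = some t) : t ∈ P ∧ t <:+ u := by
  simpa using argmax_mem h

theorem longestSuffixIn_mem_insertNone (P : Finset (List α)) (u : List α) :
    longestSuffixIn P u ∈ P.insertNone :=
  Finset.mem_insertNone.2 fun _ h => (mem_suffix_of_longestSuffixIn_eq_some h).1

theorem exists_mem_suffix_of_longestSuffixIn_eq_some {P : Finset (List α)} {u s : List α}
    (hs : s ∈ P) (hsu : s <:+ u) : ∃ t, longestSuffixIn P u = some t ∧ s <:+ t := by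
  have hmem : s ∈ (P.filter (· <:+ u)).toList := by simp [hs, hsu]
  obtain ⟨t, ht⟩ := Option.ne_none_iff_exists'.1 fun (h : longestSuffixIn P u = none) => by
    rw [longestSuffixIn, argmax_eq_none] at h
    simp [h] at hmem
  exact ⟨t, ht, suffix_of_suffix_length_le hsu (mem_suffix_of_longestSuffixIn_eq_some ht).2
    (le_of_mem_argmax hmem ht)⟩

theorem suffix_of_longestSuffixIn_eq {P : Finset (List α)} {u v s : List α}
    (h : longestSuffixIn P u = longestSuffixIn P v) (hs : s ∈ P) (hsu : s <:+ u) : s <:+ v := by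
  obtain ⟨t, ht, hst⟩ := exists_mem_suffix_of_longestSuffixIn_eq_some hs hsu
  exact hst.trans (mem_suffix_of_longestSuffixIn_eq_some (h ▸ ht)).2

theorem exists_cut_not_infix (Q : Finset (List α)) (w : List α) (hw : ∀ q ∈ Q, ¬ q <:+: w)
    {a b : ℕ} (hab : a + ∑ q ∈ Q, q.length < b) :
    ∃ i j, a ≤ i ∧ i < j ∧ j ≤ b ∧ ∀ q ∈ Q, ¬ q <:+: w.take i ++ w.drop j := by
  have hcard : (nonemptyPrefixes Q).insertNone.card < (Finset.Icc a b).card := by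
    have := card_nonemptyPrefixes_le Q
    rw [Finset.card_insertNone, Nat.card_Icc]
    omega
  obtain ⟨i, hi, j, hj, hne, hstate⟩ := Finset.exists_ne_map_eq_of_card_lt_of_maps_to hcard
    (f := fun i => longestSuffixIn (nonemptyPrefixes Q) (w.take i))
    fun i _ => longestSuffixIn_mem_insertNone _ _
  wlog hij : i < j generalizing i j
  · exact this j hj i hi hne.symm hstate.symm (by omega)
  rw [Finset.mem_Icc] at hi hj
  refine ⟨i, j, hi.1, hij, hj.2, fun q hq => ?_⟩
  refine not_infix_append_of_suffix_transfer (take_prefix_take_left hij.le)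
    (by rw [take_append_drop]; exact hw q hq) fun s hsq hs hsi => ?_
  exact suffix_of_longestSuffixIn_eq hstate (mem_nonemptyPrefixes hq hsq hs) hsi

end Automaton

section AdmissibleWords

variable {D : Finset (List ℤ)} {m : ℕ} {w : List ℤ}

def forbiddenFactors (D : Finset (List ℤ)) : Finset (List ℤ) :=
  D ∪ D.image (map fun x => -x)

theorem sum_length_forbiddenFactors_le (D : Finset (List ℤ)) :
    ∑ q ∈ forbiddenFactors D, q.length ≤ 2 * ∑ p ∈ D, p.length := by
  have hneg : ∑ q ∈ D.image (map fun x : ℤ => -x), q.length = ∑ p ∈ D, p.length := by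
    rw [Finset.sum_image fun _ _ _ _ h => map_injective_iff.2 neg_injective h]
    simp
  have := Finset.sum_union_inter (s₁ := D) (s₂ := D.image (map fun x : ℤ => -x))
    (f := length)
  rw [forbiddenFactors]
  omega

theorem admissible_iff_forbiddenFactors :
    Admissible D m w ↔ (∀ x ∈ w, x = -1 ∨ x = 0 ∨ x = 1) ∧ replicate m (0 : ℤ) <+: w ∧
      ((1 : ℤ) :: replicate (m - 1) 0) <:+ w ∧ ∀ q ∈ forbiddenFactors D, ¬ q <:+: w := by
  simp [Admissible, forbiddenFactors, or_imp, forall_and]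

theorem Admissible.one_le (hw : Admissible D m w) {p : List ℤ} (hp : p ∈ D)
    (hpm : p.length = m) : 1 ≤ m := by
  by_contra! h
  obtain rfl : p = [] := length_eq_zero_iff.1 (by omega)
  exact (hw.2.2.2 [] hp).1 nil_infix

theorem Admissible.take_append_drop (hw : Admissible D m w) (hm : 1 ≤ m) {i j : ℕ}
    (hi : m ≤ i) (hj : j + m ≤ w.length)
    (hfree : ∀ q ∈ forbiddenFactors D, ¬ q <:+: w.take i ++ w.drop j) :
    Admissible D m (w.take i ++ w.drop j) := by
  obtain ⟨hsym, hpre, hsuf, -⟩ := admissible_iff_forbiddenFactors.1 hw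
  refine admissible_iff_forbiddenFactors.2 ⟨fun x hx => ?_, ?_, ?_, hfree⟩
  · rcases mem_append.1 hx with h | h
    exacts [hsym x (take_subset i w h), hsym x (drop_subset j w h)]
  · exact ((isPrefix_append_of_length (by simp; omega)).2
      (prefix_of_prefix_length_le hpre (take_prefix i w) (by simp; omega)))
  · exact (suffix_of_suffix_length_le hsuf (drop_suffix j w) (by simp; omega)).trans
      (suffix_append _ _)

theorem Admissible.exists_shorter (hw : Admissible D m w) (hm : 1 ≤ m)
    (hlong : 2 * ∑ p ∈ D, p.length + 2 * m < w.length) :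
    ∃ w', Admissible D m w' ∧ w'.length < w.length := by
  have := sum_length_forbiddenFactors_le D
  obtain ⟨i, j, hi, hij, hj, hfree⟩ := exists_cut_not_infix (forbiddenFactors D) w
    (admissible_iff_forbiddenFactors.1 hw).2.2.2 (a := m)
    (b := w.length - m) (by omega)
  refine ⟨_, hw.take_append_drop hm hi (by omega) hfree, ?_⟩
  simp only [length_append, length_take, length_drop]
  omega

end AdmissibleWords

theorem short_admissible_word_general (D : Finset (List ℤ)) (m : ℕ)
    (hm : (∃ p ∈ D, p.length = m) ∧ ∀ p ∈ D, p.length ≤ m)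
    (M : ℕ) (hM : M = ∑ p ∈ D, p.length)
    (w : List ℤ) (hw : Admissible D m w) :
    ∃ w' : List ℤ, Admissible D m w' ∧ w'.length ≤ 2 * M + 2 * m := by
  classical
  obtain ⟨⟨p, hp, hpm⟩, -⟩ := hm
  have hm1 := hw.one_le hp hpm
  have hex : ∃ n, ∃ w : List ℤ, Admissible D m w ∧ w.length = n := ⟨_, w, hw, rfl⟩
  obtain ⟨w₀, hw₀, hlen⟩ := Nat.find_spec hex
  refine ⟨w₀, hw₀, not_lt.1 fun hlong => ?_⟩
  obtain ⟨w₁, hw₁, hlt⟩ := hw₀.exists_shorter hm1 (hM ▸ hlong)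
  exact Nat.find_min hex (hlen ▸ hlt) ⟨w₁, hw₁, rfl⟩

/-- if an admissible word exists, then one of length at most `2M + 2m`
exists, where `m` is the maximal pattern length and `M` the sum of pattern lengths. -/
theorem short_admissible_word (D : Finset (List ℤ)) (hDne : D.Nonempty)
    (hD : ∀ p ∈ D, IsPattern p) (m : ℕ)
    (hm : (∃ p ∈ D, p.length = m) ∧ ∀ p ∈ D, p.length ≤ m)
    (M : ℕ) (hM : M = ∑ p ∈ D, p.length)
    (w : List ℤ) (hw : Admissible D m w) :
    ∃ w' : List ℤ, Admissible D m w' ∧ w'.length ≤ 2 * M + 2 * m :=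
  short_admissible_word_general D m hm M hM w hw
end

section
/- Let d ≥ 1, let S be a finite nonempty set of linear endomorphisms of ℝ^d, and let ρ > 0. Suppose there exists a constant c such that for every n ≥ 0 and every finite product A₁⋯Aₙ of operators Aᵢ ∈ S, the operator norm of A₁⋯Aₙ is at most c·ρⁿ. Then there exists a norm N on ℝ^d (equivalent to the Euclidean norm) such that N(A x) ≤ ρ · N(x) for every A ∈ S and every x ∈ ℝ^d; that is, S possesses an extremal norm at level ρ. -/
/-!
For a word `L = [A₁, …, Aₙ]` over `S`, the seminorm `x ↦ ‖ρ⁻ⁿ A₁⋯Aₙ x‖` is at most `c‖x‖` by the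
growth bound, so the supremum `N` of these seminorms over all words is a seminorm between `‖·‖`
(the empty word) and `c‖·‖`. Appending a letter `A ∈ S` to a word multiplies its seminorm at `x`
by `ρ⁻¹` and turns it into the seminorm at `A x` of the shorter word, which gives `N (A x) ≤ ρ N x`.
-/

variable {E : Type*} [NormedAddCommGroup E] [NormedSpace ℝ E]

section NormalizedProduct

variable (ρ : ℝ) (L : List (E →L[ℝ] E)) (x : E)

noncomputable def normalizedProductSeminorm : Seminorm ℝ E :=
  (normSeminorm ℝ E).comp ((ρ ^ L.length)⁻¹ • L.prod).toLinearMap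

@[simp]
theorem normalizedProductSeminorm_apply :
    normalizedProductSeminorm ρ L x = ‖(ρ ^ L.length)⁻¹ • L.prod x‖ :=
  rfl

theorem normalizedProductSeminorm_nil : normalizedProductSeminorm ρ [] x = ‖x‖ := by
  simp

variable {ρ}

theorem normalizedProductSeminorm_apply_eq_mul_append (hρ : 0 < ρ) (A : E →L[ℝ] E) :
    normalizedProductSeminorm ρ L (A x) = ρ * normalizedProductSeminorm ρ (L ++ [A]) x := by
  rw [normalizedProductSeminorm_apply, normalizedProductSeminorm_apply, List.length_append,
    List.length_singleton, pow_succ, mul_inv_rev, mul_smul, norm_smul ρ⁻¹,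
    Real.norm_of_nonneg (inv_nonneg.2 hρ.le), mul_inv_cancel_left₀ hρ.ne', List.prod_append,
    List.prod_singleton]
  rfl

theorem normalizedProductSeminorm_le {c : ℝ} (hρ : 0 < ρ) (hL : ‖L.prod‖ ≤ c * ρ ^ L.length) :
    normalizedProductSeminorm ρ L x ≤ c * ‖x‖ := by
  have hρn : 0 < ρ ^ L.length := pow_pos hρ _
  calc normalizedProductSeminorm ρ L x = (ρ ^ L.length)⁻¹ * ‖L.prod x‖ := by
        rw [normalizedProductSeminorm_apply, norm_smul, Real.norm_of_nonneg (inv_pos.2 hρn).le]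
    _ ≤ (ρ ^ L.length)⁻¹ * (c * ρ ^ L.length * ‖x‖) := by
        gcongr
        exact L.prod.le_of_opNorm_le hL x
    _ = c * ‖x‖ := by field_simp

end NormalizedProduct

section ExtremalSeminorm

variable (S : Set (E →L[ℝ] E)) (ρ c : ℝ)

abbrev Words : Type _ := {L : List (E →L[ℝ] E) // ∀ A ∈ L, A ∈ S}

instance : Nonempty (Words S) := ⟨⟨[], by simp⟩⟩

def ProductsBoundedBy : Prop := ∀ L : Words S, ‖L.1.prod‖ ≤ c * ρ ^ L.1.length

/-- Without a bound `ProductsBoundedBy S ρ c` the supremum is unbounded and this is the junk `⊥`. -/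
noncomputable def extremalSeminorm : Seminorm ℝ E :=
  ⨆ L : Words S, normalizedProductSeminorm ρ L.1

variable {S ρ c}

theorem bddAbove_normalizedProductSeminorm (hρ : 0 < ρ) (hbound : ProductsBoundedBy S ρ c)
    (x : E) : BddAbove (Set.range fun L : Words S ↦ normalizedProductSeminorm ρ L.1 x) := by
  refine ⟨c * ‖x‖, ?_⟩
  rintro _ ⟨L, rfl⟩
  exact normalizedProductSeminorm_le L.1 x hρ (hbound L)

theorem extremalSeminorm_apply (hρ : 0 < ρ) (hbound : ProductsBoundedBy S ρ c) (x : E) :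
    extremalSeminorm S ρ x = ⨆ L : Words S, normalizedProductSeminorm ρ L.1 x :=
  Seminorm.iSup_apply <| Seminorm.bddAbove_range_iff.2 <|
    bddAbove_normalizedProductSeminorm hρ hbound

theorem norm_le_extremalSeminorm (hρ : 0 < ρ) (hbound : ProductsBoundedBy S ρ c) (x : E) :
    ‖x‖ ≤ extremalSeminorm S ρ x := by
  rw [extremalSeminorm_apply hρ hbound, ← normalizedProductSeminorm_nil ρ x]
  exact le_ciSup (bddAbove_normalizedProductSeminorm hρ hbound x) ⟨[], by simp⟩

theorem extremalSeminorm_le (hρ : 0 < ρ) (hbound : ProductsBoundedBy S ρ c) (x : E) :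
    extremalSeminorm S ρ x ≤ c * ‖x‖ := by
  rw [extremalSeminorm_apply hρ hbound]
  exact ciSup_le fun L ↦ normalizedProductSeminorm_le L.1 x hρ (hbound L)

theorem extremalSeminorm_apply_le (hρ : 0 < ρ) (hbound : ProductsBoundedBy S ρ c)
    {A : E →L[ℝ] E} (hA : A ∈ S) (x : E) :
    extremalSeminorm S ρ (A x) ≤ ρ * extremalSeminorm S ρ x := by
  rw [extremalSeminorm_apply hρ hbound, extremalSeminorm_apply hρ hbound]
  refine ciSup_le fun L ↦ ?_
  have hLA : ∀ B ∈ L.1 ++ [A], B ∈ S := by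
    simpa [or_imp, forall_and, hA] using L.2
  rw [normalizedProductSeminorm_apply_eq_mul_append L.1 x hρ A]
  gcongr
  exact le_ciSup (bddAbove_normalizedProductSeminorm hρ hbound x) ⟨L.1 ++ [A], hLA⟩

end ExtremalSeminorm

theorem exists_extremal_norm_general (d : ℕ)
    (S : Finset (EuclideanSpace ℝ (Fin d) →L[ℝ] EuclideanSpace ℝ (Fin d)))
    (ρ : ℝ) (hρ : 0 < ρ)
    (hbound : ∃ c : ℝ, ∀ L : List (EuclideanSpace ℝ (Fin d) →L[ℝ] EuclideanSpace ℝ (Fin d)),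
      (∀ A ∈ L, A ∈ S) → ‖L.prod‖ ≤ c * ρ ^ L.length) :
    ∃ N : Seminorm ℝ (EuclideanSpace ℝ (Fin d)),
      (∃ c₁ c₂ : ℝ, 0 < c₁ ∧ 0 < c₂ ∧ ∀ x, c₁ * ‖x‖ ≤ N x ∧ N x ≤ c₂ * ‖x‖) ∧
      ∀ A ∈ S, ∀ x, N (A x) ≤ ρ * N x := by
  obtain ⟨c, hc⟩ := hbound
  have hbound : ProductsBoundedBy (S : Set _) ρ c := fun L ↦ hc L.1 L.2
  refine ⟨extremalSeminorm S ρ, ⟨1, max c 1, one_pos, by positivity, fun x ↦ ⟨?_, ?_⟩⟩,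
    fun A hA ↦ extremalSeminorm_apply_le hρ hbound hA⟩
  · simpa using norm_le_extremalSeminorm hρ hbound x
  · exact (extremalSeminorm_le hρ hbound x).trans (by gcongr; exact le_max_left c 1)

/-- if all products of operators from a finite nonempty set `S` of linear
endomorphisms of `ℝ^d` satisfy `‖A₁⋯Aₙ‖ ≤ c·ρⁿ`, then `S` possesses an extremal norm at
level `ρ`: a norm `N` on `ℝ^d`, equivalent to the Euclidean norm, with `N(Ax) ≤ ρ·N(x)`
for all `A ∈ S` and all `x`. -/
theorem exists_extremal_norm (d : ℕ) (hd : 1 ≤ d)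
    (S : Finset (EuclideanSpace ℝ (Fin d) →L[ℝ] EuclideanSpace ℝ (Fin d)))
    (hS : S.Nonempty) (ρ : ℝ) (hρ : 0 < ρ)
    (hbound : ∃ c : ℝ, ∀ L : List (EuclideanSpace ℝ (Fin d) →L[ℝ] EuclideanSpace ℝ (Fin d)),
      (∀ A ∈ L, A ∈ S) → ‖L.prod‖ ≤ c * ρ ^ L.length) :
    ∃ N : Seminorm ℝ (EuclideanSpace ℝ (Fin d)),
      (∃ c₁ c₂ : ℝ, 0 < c₁ ∧ 0 < c₂ ∧ ∀ x, c₁ * ‖x‖ ≤ N x ∧ N x ≤ c₂ * ‖x‖) ∧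
      ∀ A ∈ S, ∀ x, N (A x) ≤ ρ * N x :=
  exists_extremal_norm_general d S ρ hρ hbound
end
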